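/- arXiv:2502.11392 — 3 statements merged into one kernel-verified Lean document; each statement's English description precedes it below -/
import Mathlib

section
/- Let F : ℝ → ℝ be C¹ with F' > 0 on the relevant range, let κ > 0, N ≥ 1, and let ω : [0,∞) → ℝ^N be C¹. If (θ, ω) solves θ̇_α = ω_α and F'(ω_α) ω̇_α = (κ/N) Σ_β φ_{αβ} (ω_β − ω_α) cos(θ_β − θ_α) with ω_α(0) = G(ν_α + (κ/N) Σ_β φ_{αβ} sin(θ⁰_β − θ⁰_α)), then F(ω_α(t)) = ν_α + (κ/N) Σ_β φ_{αβ} sin(θ_β(t) − θ_α(t)) for all t ≥ 0 and all α, where G = F^{-1}. -/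
/-!
Along a solution, `F (ω α) - (κ/N) Σ_β φ_{αβ} sin (θ_β - θ_α)` has derivative
`F'(ω_α) ω̇_α - (κ/N) Σ_β φ_{αβ} cos (θ_β - θ_α) (ω_β - ω_α)`, which vanishes by the second-order
equation. So the quantity is constant in time, and the initial condition `ω_α(0) = G(…)` with
`F ∘ G = id` makes its value `ν_α`.
-/

open Real

section

variable {ι : Type*} [Fintype ι]

theorem hasDerivAt_sum_mul_sin_sub (φ : ι → ℝ) (θ ω : ℝ → ι → ℝ)
    (hθ : ∀ t β, HasDerivAt (fun s => θ s β) (ω t β) t) (α : ι) (t : ℝ) :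
    HasDerivAt (fun s => ∑ β, φ β * sin (θ s β - θ s α))
      (∑ β, φ β * (ω t β - ω t α) * cos (θ t β - θ t α)) t := by
  refine HasDerivAt.fun_sum fun β _ => ?_
  exact (((hθ t β).fun_sub (hθ t α)).sin.const_mul (φ β)).congr_deriv (by ring)

theorem kuramoto_conserved_eq_initial (K : ℝ) (F : ℝ → ℝ) (hF : Differentiable ℝ F)
    (φ : ι → ι → ℝ) (θ ω ω' : ℝ → ι → ℝ)
    (hθ : ∀ t β, HasDerivAt (fun s => θ s β) (ω t β) t)
    (hω : ∀ t β, HasDerivAt (fun s => ω s β) (ω' t β) t)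
    (heq : ∀ t α, deriv F (ω t α) * ω' t α
      = K * ∑ β, φ α β * (ω t β - ω t α) * cos (θ t β - θ t α))
    (α : ι) (t : ℝ) :
    F (ω t α) - K * ∑ β, φ α β * sin (θ t β - θ t α)
      = F (ω 0 α) - K * ∑ β, φ α β * sin (θ 0 β - θ 0 α) := by
  have hderiv : ∀ s, HasDerivAt
      (fun u => F (ω u α) - K * ∑ β, φ α β * sin (θ u β - θ u α)) 0 s := fun s => by
    have hFω := (hF (ω s α)).hasDerivAt.comp s (hω s α)
    have hsin := (hasDerivAt_sum_mul_sin_sub (φ α) θ ω hθ α s).const_mul K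
    simpa only [heq s α, sub_self, Function.comp_def] using hFω.fun_sub hsin
  exact is_const_of_deriv_eq_zero (fun s => (hderiv s).differentiableAt)
    (fun s => (hderiv s).deriv) t 0

end

theorem second_order_reduces_to_first_order_general (N : ℕ) (κ : ℝ)
    (F G : ℝ → ℝ) (hF : ContDiff ℝ 1 F)
    (hFG : ∀ y, F (G y) = y)
    (φ : Fin N → Fin N → ℝ) (ν : Fin N → ℝ) (θ0 : Fin N → ℝ)
    (θ ω ω' : ℝ → Fin N → ℝ)
    (hθinit : ∀ α, θ 0 α = θ0 α)
    (hθ : ∀ t α, HasDerivAt (fun s => θ s α) (ω t α) t)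
    (hω : ∀ t α, HasDerivAt (fun s => ω s α) (ω' t α) t)
    (heq : ∀ t α, deriv F (ω t α) * ω' t α
      = κ / N * ∑ β, φ α β * (ω t β - ω t α) * Real.cos (θ t β - θ t α))
    (hω0 : ∀ α, ω 0 α = G (ν α + κ / N * ∑ β, φ α β * Real.sin (θ0 β - θ0 α))) :
    ∀ t, 0 ≤ t → ∀ α,
      F (ω t α) = ν α + κ / N * ∑ β, φ α β * Real.sin (θ t β - θ t α) := by
  intro t _ α
  have hconst := kuramoto_conserved_eq_initial (κ / N) F (hF.differentiable one_ne_zero)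
    φ θ ω ω' hθ hω heq α t
  rw [hω0 α, hFG] at hconst
  simp only [hθinit] at hconst
  linarith

theorem second_order_reduces_to_first_order (N : ℕ) (hN : 1 ≤ N) (κ : ℝ) (hκ : 0 < κ)
    (F G : ℝ → ℝ) (hF : ContDiff ℝ 1 F) (hF' : ∀ x, 0 < deriv F x)
    (hGF : ∀ x, G (F x) = x) (hFG : ∀ y, F (G y) = y)
    (φ : Fin N → Fin N → ℝ) (ν : Fin N → ℝ) (θ0 : Fin N → ℝ)
    (θ ω ω' : ℝ → Fin N → ℝ)
    (hθinit : ∀ α, θ 0 α = θ0 α)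
    (hθ : ∀ t α, HasDerivAt (fun s => θ s α) (ω t α) t)
    (hω : ∀ t α, HasDerivAt (fun s => ω s α) (ω' t α) t)
    (heq : ∀ t α, deriv F (ω t α) * ω' t α
      = κ / N * ∑ β, φ α β * (ω t β - ω t α) * Real.cos (θ t β - θ t α))
    (hω0 : ∀ α, ω 0 α = G (ν α + κ / N * ∑ β, φ α β * Real.sin (θ0 β - θ0 α))) :
    ∀ t, 0 ≤ t → ∀ α,
      F (ω t α) = ν α + κ / N * ∑ β, φ α β * Real.sin (θ t β - θ t α) :=
  second_order_reduces_to_first_order_general N κ F G hF hFG φ ν θ0 θ ω ω' hθinit hθ hω heq hω0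
end

section
/- Let G be C¹ on an interval [c, d] with |G'| ≤ M_{G'}, let κ > 0, b_Φ > 0, and N ≥ 1. For two families (ν_α, φ_{αβ}, θ_α) and (ν̃_α, φ̃_{αβ}, θ̃_α) with |φ_{αβ}|, |φ̃_{αβ}| ≤ b_Φ (and all arguments of G in [c,d]), define ω_α := G(ν_α + (κ/N) Σ_β φ_{αβ} sin(θ_β − θ_α)) and similarly ω̃_α. Then for p ∈ (1, ∞), ‖Ω − Ω̃‖_p ≤ M_{G'} ‖V − Ṽ‖_p + 2κ b_Φ M_{G'} ‖Θ − Θ̃‖_p + (κ M_{G'}/N^{1/p}) ‖Φ − Φ̃‖_p, where ‖·‖_p denotes the ℓ_p-norm of the vector (resp. entrywise ℓ_p-norm of the matrix Φ − Φ̃). -/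
/-!
By the mean value theorem `G` is `MG'`-Lipschitz on `[c, d]`, so it suffices to bound the `ℓ^p`
distance of the arguments of `G`. Since `sin` is 1-Lipschitz, the coupling terms at `α` differ by
at most `bΦ (∑ β |Δθ β| + N |Δθ α|) + ∑ β |Δφ α β|`. Minkowski's inequality and the power-mean
bound `∑ β x β ≤ N ^ (1 - 1/p) ‖x‖_p` turn each of these three pieces into the matching term of
the estimate; the two `θ`-pieces contribute `bΦ N ‖Δθ‖_p` each, whence the factor `2`.
-/

open Finset Real

section LpEstimates

variable {ι η : Type*} [Fintype ι] [Fintype η] {p : ℝ}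

/-- For `1 ≤ p` the norm of `PiLp p`, kept as the explicit sum in which the estimate is stated. -/
noncomputable def lpNorm (p : ℝ) (f : ι → ℝ) : ℝ := (∑ i, |f i| ^ p) ^ (1 / p)

lemma lpNorm_nonneg (f : ι → ℝ) : 0 ≤ lpNorm p f :=
  rpow_nonneg (sum_nonneg fun _ _ => rpow_nonneg (abs_nonneg _) _) _

lemma lpNorm_rpow (hp : p ≠ 0) (f : ι → ℝ) : lpNorm p f ^ p = ∑ i, |f i| ^ p := by
  rw [lpNorm, ← rpow_mul (sum_nonneg fun _ _ => rpow_nonneg (abs_nonneg _) _),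
    one_div_mul_cancel hp, rpow_one]

lemma lpNorm_le_lpNorm (hp : 0 ≤ p) {f g : ι → ℝ} (h : ∀ i, |f i| ≤ |g i|) :
    lpNorm p f ≤ lpNorm p g :=
  rpow_le_rpow (sum_nonneg fun _ _ => rpow_nonneg (abs_nonneg _) _)
    (sum_le_sum fun i _ => rpow_le_rpow (abs_nonneg _) (h i) hp) (one_div_nonneg.mpr hp)

lemma lpNorm_abs (f : ι → ℝ) : lpNorm p (fun i => |f i|) = lpNorm p f := by
  simp only [lpNorm, abs_abs]

lemma lpNorm_const_mul (hp : p ≠ 0) (c : ℝ) (f : ι → ℝ) :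
    lpNorm p (fun i => c * f i) = |c| * lpNorm p f := by
  simp_rw [lpNorm, abs_mul, mul_rpow (abs_nonneg c) (abs_nonneg _), ← mul_sum]
  rw [mul_rpow (rpow_nonneg (abs_nonneg c) _) (sum_nonneg fun _ _ => rpow_nonneg (abs_nonneg _) _),
    ← rpow_mul (abs_nonneg c), mul_one_div_cancel hp, rpow_one]

lemma lpNorm_const (hp : p ≠ 0) (c : ℝ) :
    lpNorm p (fun _ : ι => c) = (Fintype.card ι : ℝ) ^ (1 / p) * |c| := by
  rw [lpNorm, sum_const, card_univ, nsmul_eq_mul, mul_rpow (Nat.cast_nonneg _)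
    (rpow_nonneg (abs_nonneg c) _), ← rpow_mul (abs_nonneg c), mul_one_div_cancel hp, rpow_one]

lemma lpNorm_add_le (hp : 1 ≤ p) (f g : ι → ℝ) : lpNorm p (f + g) ≤ lpNorm p f + lpNorm p g :=
  Lp_add_le univ f g hp

lemma sum_abs_le_card_rpow_mul_lpNorm (hp : 1 ≤ p) (f : ι → ℝ) :
    ∑ i, |f i| ≤ (Fintype.card ι : ℝ) ^ (1 - 1 / p) * lpNorm p f := by
  have hp0 : 0 < p := by linarith
  have h := rpow_sum_le_const_mul_sum_rpow univ f hp
  rw [card_univ, ← lpNorm_rpow hp0.ne'] at h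
  refine (rpow_le_rpow_iff (sum_nonneg fun _ _ => abs_nonneg _)
    (mul_nonneg (by positivity) (lpNorm_nonneg f)) hp0).mp ?_
  rwa [mul_rpow (by positivity) (lpNorm_nonneg f), ← rpow_mul (Nat.cast_nonneg _),
    sub_mul, one_div_mul_cancel hp0.ne', one_mul]

lemma lpNorm_uncurry (f : ι → η → ℝ) :
    lpNorm p (Function.uncurry f) = (∑ i, ∑ j, |f i j| ^ p) ^ (1 / p) := by
  rw [lpNorm, Fintype.sum_prod_type]
  rfl

lemma lpNorm_sum_abs_le (hp : 1 ≤ p) (f : ι → η → ℝ) :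
    lpNorm p (fun i => ∑ j, |f i j|) ≤
      (Fintype.card η : ℝ) ^ (1 - 1 / p) * lpNorm p (Function.uncurry f) := by
  have hp0 : p ≠ 0 := by positivity
  calc lpNorm p (fun i => ∑ j, |f i j|)
      ≤ lpNorm p (fun i => (Fintype.card η : ℝ) ^ (1 - 1 / p) * lpNorm p (f i)) := by
        refine lpNorm_le_lpNorm (by linarith) fun i => ?_
        rw [abs_of_nonneg (sum_nonneg fun j _ => abs_nonneg _),
          abs_of_nonneg (mul_nonneg (by positivity) (lpNorm_nonneg _))]
        exact sum_abs_le_card_rpow_mul_lpNorm hp (f i)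
    _ = (Fintype.card η : ℝ) ^ (1 - 1 / p) * lpNorm p (Function.uncurry f) := by
        rw [lpNorm_const_mul hp0, abs_of_nonneg (by positivity), lpNorm_uncurry, lpNorm]
        simp_rw [abs_of_nonneg (lpNorm_nonneg _), lpNorm_rpow hp0]

noncomputable def kuramotoCoupling (φ : ι → ι → ℝ) (θ : ι → ℝ) (α : ι) : ℝ :=
  ∑ β, φ α β * sin (θ β - θ α)

lemma abs_mul_sin_sub_mul_sin_le (a a' x x' : ℝ) :
    |a * sin x - a' * sin x'| ≤ |a| * |x - x'| + |a - a'| :=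
  calc |a * sin x - a' * sin x'| = |a * (sin x - sin x') + (a - a') * sin x'| := by
        congr 1; ring
    _ ≤ |a| * |sin x - sin x'| + |a - a'| * |sin x'| := by
        rw [← abs_mul, ← abs_mul]; exact abs_add_le _ _
    _ ≤ |a| * |x - x'| + |a - a'| * 1 :=
        add_le_add (mul_le_mul_of_nonneg_left (abs_sin_sub_sin_le x x') (abs_nonneg a))
          (mul_le_mul_of_nonneg_left (abs_sin_le_one x') (abs_nonneg _))
    _ = |a| * |x - x'| + |a - a'| := by rw [mul_one]

lemma abs_kuramotoCoupling_sub_le {b : ℝ} {φ φ' : ι → ι → ℝ} {θ θ' : ι → ℝ} {α : ι}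
    (hφ : ∀ β, |φ α β| ≤ b) :
    |kuramotoCoupling φ θ α - kuramotoCoupling φ' θ' α| ≤
      b * ∑ β, |θ β - θ' β| + Fintype.card ι * b * |θ α - θ' α| + ∑ β, |φ α β - φ' α β| := by
  rw [kuramotoCoupling, kuramotoCoupling, ← sum_sub_distrib]
  calc _ ≤ ∑ β, |φ α β * sin (θ β - θ α) - φ' α β * sin (θ' β - θ' α)| :=
        abs_sum_le_sum_abs _ _
    _ ≤ ∑ β, (b * (|θ β - θ' β| + |θ α - θ' α|) + |φ α β - φ' α β|) := by
        gcongr with β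
        refine (abs_mul_sin_sub_mul_sin_le _ _ _ _).trans ?_
        have hθ : |(θ β - θ α) - (θ' β - θ' α)| ≤ |θ β - θ' β| + |θ α - θ' α| := by
          rw [show (θ β - θ α) - (θ' β - θ' α) = (θ β - θ' β) - (θ α - θ' α) by ring]
          exact abs_sub _ _
        gcongr
        · exact (abs_nonneg _).trans (hφ β)
        · exact hφ β
    _ = _ := by
        simp only [sum_add_distrib, mul_add, ← mul_sum, sum_const, card_univ, nsmul_eq_mul]
        ring

lemma lpNorm_kuramotoCoupling_sub_le (hp : 1 ≤ p) {b : ℝ} (hb : 0 ≤ b) {φ φ' : ι → ι → ℝ}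
    (θ θ' : ι → ℝ) (hφ : ∀ α β, |φ α β| ≤ b) :
    lpNorm p (fun α => kuramotoCoupling φ θ α - kuramotoCoupling φ' θ' α) ≤
      2 * b * Fintype.card ι * lpNorm p (θ - θ') +
        (Fintype.card ι : ℝ) ^ (1 - 1 / p) * lpNorm p (Function.uncurry (φ - φ')) := by
  have hp0 : p ≠ 0 := by positivity
  set n : ℝ := (Fintype.card ι : ℝ)
  have hn : n ^ (1 / p) * n ^ (1 - 1 / p) = n := by
    rw [← rpow_add' (by positivity) (by simp), add_sub_cancel, rpow_one]
  calc _ ≤ lpNorm p ((fun _ => b * ∑ β, |(θ - θ') β|) + (fun α => n * b * |(θ - θ') α|)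
          + fun α => ∑ β, |(φ - φ') α β|) := by
        refine lpNorm_le_lpNorm (by linarith) fun α => ?_
        exact (abs_kuramotoCoupling_sub_le (hφ α)).trans (le_abs_self _)
    _ ≤ lpNorm p (fun _ => b * ∑ β, |(θ - θ') β|) + lpNorm p (fun α => n * b * |(θ - θ') α|)
          + lpNorm p (fun α => ∑ β, |(φ - φ') α β|) :=
        (lpNorm_add_le hp _ _).trans (add_le_add_left (lpNorm_add_le hp _ _) _)
    _ ≤ n ^ (1 / p) * (b * (n ^ (1 - 1 / p) * lpNorm p (θ - θ'))) + n * b * lpNorm p (θ - θ')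
          + n ^ (1 - 1 / p) * lpNorm p (Function.uncurry (φ - φ')) := by
        rw [lpNorm_const hp0, lpNorm_const_mul hp0, lpNorm_abs, abs_of_nonneg (by positivity),
          abs_of_nonneg (by positivity)]
        gcongr
        · exact sum_abs_le_card_rpow_mul_lpNorm hp (θ - θ')
        · exact lpNorm_sum_abs_le hp (φ - φ')
    _ = _ := by linear_combination (b * lpNorm p (θ - θ')) * hn

end LpEstimates

theorem initial_frequency_lp_estimate (N : ℕ) (hN : 1 ≤ N) (p : ℝ) (hp : 1 < p)
    (c d κ bΦ MG' : ℝ) (hκ : 0 < κ) (hbΦ : 0 < bΦ)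
    (G : ℝ → ℝ)
    (hGC : ContDiffOn ℝ 1 G (Set.Icc c d))
    (hG' : ∀ x ∈ Set.Icc c d, |derivWithin G (Set.Icc c d) x| ≤ MG')
    (ν ν' θ θ' ω ω' : Fin N → ℝ) (φ φ' : Fin N → Fin N → ℝ)
    (hφ : ∀ α β, |φ α β| ≤ bΦ ∧ |φ' α β| ≤ bΦ)
    (harg : ∀ α, (ν α + κ / N * ∑ β, φ α β * Real.sin (θ β - θ α)) ∈ Set.Icc c d
      ∧ (ν' α + κ / N * ∑ β, φ' α β * Real.sin (θ' β - θ' α)) ∈ Set.Icc c d)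
    (hω : ∀ α, ω α = G (ν α + κ / N * ∑ β, φ α β * Real.sin (θ β - θ α)))
    (hω' : ∀ α, ω' α = G (ν' α + κ / N * ∑ β, φ' α β * Real.sin (θ' β - θ' α))) :
    (∑ α, |ω α - ω' α| ^ p) ^ (1 / p)
      ≤ MG' * (∑ α, |ν α - ν' α| ^ p) ^ (1 / p)
        + 2 * κ * bΦ * MG' * (∑ α, |θ α - θ' α| ^ p) ^ (1 / p)
        + κ * MG' / (N : ℝ) ^ (1 / p)
          * (∑ α, ∑ β, |φ α β - φ' α β| ^ p) ^ (1 / p) := by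
  have hp0 : 0 < p := by linarith
  have hN0 : (0 : ℝ) < N := by exact_mod_cast hN
  have hMG : 0 ≤ MG' := (abs_nonneg _).trans (hG' _ (harg ⟨0, hN⟩).1)
  set Δ : Fin N → ℝ := fun α => kuramotoCoupling φ θ α - kuramotoCoupling φ' θ' α with hΔ
  have hlip : ∀ α, |ω α - ω' α| ≤ |MG' * ((ν - ν') α + κ / N * Δ α)| := by
    intro α
    have hG := (convex_Icc c d).norm_image_sub_le_of_norm_derivWithin_le
      (hGC.differentiableOn one_ne_zero) hG' (harg α).2 (harg α).1
    have harg_sub : ν α + κ / N * ∑ β, φ α β * sin (θ β - θ α)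
        - (ν' α + κ / N * ∑ β, φ' α β * sin (θ' β - θ' α)) = (ν - ν') α + κ / N * Δ α := by
      rw [hΔ]
      simp only [kuramotoCoupling, Pi.sub_apply]
      ring
    rw [hω, hω', abs_mul, abs_of_nonneg hMG, ← harg_sub]
    simpa only [norm_eq_abs] using hG
  have hκN : κ / N * (N : ℝ) ^ (1 - 1 / p) = κ / N ^ (1 / p) := by
    rw [rpow_sub hN0, rpow_one]
    field_simp
  calc (∑ α, |ω α - ω' α| ^ p) ^ (1 / p) = lpNorm p (ω - ω') := rfl
    _ ≤ lpNorm p (fun α => MG' * ((ν - ν') α + κ / N * Δ α)) := lpNorm_le_lpNorm hp0.le hlip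
    _ ≤ MG' * (lpNorm p (ν - ν') + κ / N * lpNorm p Δ) := by
        rw [lpNorm_const_mul hp0.ne', abs_of_nonneg hMG]
        gcongr
        refine (lpNorm_add_le hp.le (ν - ν') fun α => κ / N * Δ α).trans_eq ?_
        rw [lpNorm_const_mul hp0.ne', abs_of_nonneg (by positivity)]
    _ ≤ MG' * (lpNorm p (ν - ν') + κ / N * (2 * bΦ * N * lpNorm p (θ - θ')
          + (N : ℝ) ^ (1 - 1 / p) * lpNorm p (Function.uncurry (φ - φ')))) := by
        gcongr
        simpa only [Fintype.card_fin] using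
          lpNorm_kuramotoCoupling_sub_le hp.le hbΦ.le θ θ' fun α β => (hφ α β).1
    _ = _ := by
        rw [lpNorm_uncurry, mul_add (κ / N), ← mul_assoc (κ / N) ((N : ℝ) ^ _), hκN]
        simp only [lpNorm, Pi.sub_apply]
        field_simp
        ring
end

section
/- Let G : ℝ → ℝ be C¹ with G' ≥ m_{G'} > 0 on the relevant range, and suppose κ m_Φ sin θ* > D(V) where D(V) := max_α ν_α − min_α ν_α, 0 < θ* < π/2, m_Φ := min_{α,β} φ_{αβ} > 0. Suppose θ : [0,∞) → ℝ^N solves θ̇_α = G(ν_α + (κ/N) Σ_β φ_{αβ} sin(θ_β − θ_α)) with D(Θ(0)) ≤ θ*, where D(Θ(t)) := max_α θ_α(t) − min_α θ_α(t). Then D(Θ(t)) ≤ θ* for all t ≥ 0. -/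
open Filter Set

lemma aux_ev {g : ℝ → ℝ} {d x : ℝ} (h : HasDerivAt g d x) (hd : d < 0) :
    ∀ᶠ s in nhdsWithin x (Set.Ioi x), g s < g x := by
  have h1 : Filter.Tendsto (slope g x) (nhdsWithin x (Set.Ioi x)) (nhds d) := by
    have h2 := (h.hasDerivWithinAt (s := Set.Ioi x))
    rw [hasDerivWithinAt_iff_tendsto_slope] at h2
    simpa [Set.diff_singleton_eq_self (by simp : x ∉ Set.Ioi x)] using h2
  have h2 : ∀ᶠ s in nhdsWithin x (Set.Ioi x), slope g x s < 0 :=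
    h1.eventually_lt_const hd
  filter_upwards [h2, self_mem_nhdsWithin] with s hs hs'
  have hxs : x < s := hs'
  rw [slope_def_field] at hs
  rcases div_neg_iff.mp hs with ⟨h3, h4⟩ | ⟨h3, h4⟩ <;> linarith

theorem trapping_set_lemma (N : ℕ) (hN : 1 ≤ N) (κ θs mG' mΦ : ℝ)
    (hθs0 : 0 < θs) (hθs : θs < Real.pi / 2)
    (G : ℝ → ℝ) (hGC : ContDiff ℝ 1 G) (hmG' : 0 < mG') (hG' : ∀ x, mG' ≤ deriv G x)
    (ν : Fin N → ℝ) (φ : Fin N → Fin N → ℝ)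
    (hmΦ : 0 < mΦ) (hφ : ∀ α β, mΦ ≤ φ α β)
    (hκ : (⨆ α, ν α) - (⨅ α, ν α) < κ * mΦ * Real.sin θs)
    (θ : ℝ → Fin N → ℝ)
    (hθ : ∀ t α, HasDerivAt (fun s => θ s α)
      (G (ν α + κ / N * ∑ β, φ α β * Real.sin (θ t β - θ t α))) t)
    (h0 : (⨆ α, θ 0 α) - (⨅ α, θ 0 α) ≤ θs) :
    ∀ t, 0 ≤ t → (⨆ α, θ t α) - (⨅ α, θ t α) ≤ θs := by
  have hNpos : 0 < N := hN
  haveI : Nonempty (Fin N) := Fin.pos_iff_nonempty.mp hNpos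
  have hNne : (N : ℝ) ≠ 0 := Nat.cast_ne_zero.mpr (by omega)
  have hπ : 0 < Real.pi := Real.pi_pos
  have hsθs : 0 < Real.sin θs := Real.sin_pos_of_pos_of_lt_pi hθs0 (by linarith)
  -- κ is positive
  have hκpos : 0 < κ := by
    have h1 : (⨅ α, ν α) ≤ ν (Classical.arbitrary (Fin N)) :=
      ciInf_le (Finite.bddBelow_range ν) _
    have h2 : ν (Classical.arbitrary (Fin N)) ≤ ⨆ α, ν α :=
      le_ciSup (Finite.bddAbove_range ν) _
    nlinarith [mul_pos hmΦ hsθs]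
  -- G is strictly monotone
  have hGmono : StrictMono G := by
    apply strictMono_of_deriv_pos
    intro x; linarith [hG' x]
  -- continuity & differentiability
  have hdiffθ : ∀ α, Differentiable ℝ (fun s => θ s α) := fun α s => (hθ s α).differentiableAt
  have hcont : ∀ α, Continuous fun s => θ s α := fun α => (hdiffθ α).continuous
  -- key: derivative comparison at an extremal configuration
  have key : ∀ s α β, (∀ γ, θ s β ≤ θ s γ) → (∀ γ, θ s γ ≤ θ s α) →
      θ s α - θ s β = θs →
      G (ν α + κ / N * ∑ γ, φ α γ * Real.sin (θ s γ - θ s α)) <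
      G (ν β + κ / N * ∑ γ, φ β γ * Real.sin (θ s γ - θ s β)) := by
    intro s α β hmin hmax heq
    apply hGmono
    set x := θ s with hx
    have hterm : ∀ γ ∈ Finset.univ,
        φ α γ * Real.sin (x γ - x α) - φ β γ * Real.sin (x γ - x β)
          ≤ -(mΦ * Real.sin θs) := by
      intro γ _
      have ha : 0 ≤ x γ - x β := by linarith [hmin γ]
      have hb : 0 ≤ x α - x γ := by linarith [hmax γ]
      have hab : (x γ - x β) + (x α - x γ) = θs := by linarith
      have hsa : 0 ≤ Real.sin (x γ - x β) :=
        Real.sin_nonneg_of_nonneg_of_le_pi ha (by linarith)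
      have hsb : 0 ≤ Real.sin (x α - x γ) :=
        Real.sin_nonneg_of_nonneg_of_le_pi hb (by linarith)
      have hsum : Real.sin θs ≤ Real.sin (x γ - x β) + Real.sin (x α - x γ) := by
        have hadd : Real.sin θs = Real.sin (x γ - x β) * Real.cos (x α - x γ)
            + Real.cos (x γ - x β) * Real.sin (x α - x γ) := by
          rw [← Real.sin_add, hab]
        nlinarith [Real.cos_le_one (x α - x γ), Real.cos_le_one (x γ - x β),
          mul_nonneg hsa (sub_nonneg.2 (Real.cos_le_one (x α - x γ))),
          mul_nonneg hsb (sub_nonneg.2 (Real.cos_le_one (x γ - x β)))]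
      have hneg : Real.sin (x γ - x α) = -Real.sin (x α - x γ) := by
        rw [← Real.sin_neg]; ring_nf
      have h1 : mΦ * Real.sin (x α - x γ) ≤ φ α γ * Real.sin (x α - x γ) :=
        mul_le_mul_of_nonneg_right (hφ α γ) hsb
      have h2 : mΦ * Real.sin (x γ - x β) ≤ φ β γ * Real.sin (x γ - x β) :=
        mul_le_mul_of_nonneg_right (hφ β γ) hsa
      rw [hneg]
      nlinarith [mul_le_mul_of_nonneg_left hsum hmΦ.le]
    have hsum2 : ∑ γ, (φ α γ * Real.sin (x γ - x α) - φ β γ * Real.sin (x γ - x β))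
        ≤ (N : ℝ) * (-(mΦ * Real.sin θs)) := by
      calc ∑ γ, (φ α γ * Real.sin (x γ - x α) - φ β γ * Real.sin (x γ - x β))
          ≤ ∑ _γ : Fin N, (-(mΦ * Real.sin θs)) := Finset.sum_le_sum hterm
        _ = (N : ℝ) * (-(mΦ * Real.sin θs)) := by
            rw [Finset.sum_const, Finset.card_univ, Fintype.card_fin, nsmul_eq_mul]
    have hdiff : (∑ γ, φ α γ * Real.sin (x γ - x α)) - (∑ γ, φ β γ * Real.sin (x γ - x β))
        = ∑ γ, (φ α γ * Real.sin (x γ - x α) - φ β γ * Real.sin (x γ - x β)) := by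
      rw [Finset.sum_sub_distrib]
    have hκN : 0 ≤ κ / N := div_nonneg hκpos.le (Nat.cast_nonneg N)
    have hmul : κ / N * ((∑ γ, φ α γ * Real.sin (x γ - x α))
          - (∑ γ, φ β γ * Real.sin (x γ - x β)))
        ≤ -(κ * mΦ * Real.sin θs) := by
      rw [hdiff]
      calc κ / N * ∑ γ, (φ α γ * Real.sin (x γ - x α) - φ β γ * Real.sin (x γ - x β))
          ≤ κ / N * ((N : ℝ) * (-(mΦ * Real.sin θs))) :=
            mul_le_mul_of_nonneg_left hsum2 hκN
        _ = -(κ * mΦ * Real.sin θs) := by field_simp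
    have hν : ν α - ν β ≤ (⨆ α, ν α) - (⨅ α, ν α) := by
      have h1 : ν α ≤ ⨆ α, ν α := le_ciSup (Finite.bddAbove_range ν) _
      have h2 : (⨅ α, ν α) ≤ ν β := ciInf_le (Finite.bddBelow_range ν) _
      linarith
    nlinarith [hmul]
  -- pairwise statement for all t ≥ 0
  have main : ∀ t, 0 ≤ t → ∀ α β, θ t α - θ t β ≤ θs := by
    intro t ht
    by_contra hcon
    push_neg at hcon
    obtain ⟨α₁, β₁, hαβ⟩ := hcon
    set S : Set ℝ := Icc 0 t ∩ ⋂ α, ⋂ β, {s | θ s α - θ s β ≤ θs} with hS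
    have hP0 : ∀ α β, θ 0 α - θ 0 β ≤ θs := by
      intro α β
      have h1 : θ 0 α ≤ ⨆ γ, θ 0 γ := le_ciSup (Finite.bddAbove_range _) _
      have h2 : (⨅ γ, θ 0 γ) ≤ θ 0 β := ciInf_le (Finite.bddBelow_range _) _
      linarith
    have hSne : S.Nonempty := ⟨0, ⟨le_refl 0, ht⟩, by simp only [Set.mem_iInter]; exact fun α β => hP0 α β⟩
    have hSclosed : IsClosed S := by
      apply IsClosed.inter isClosed_Icc
      exact isClosed_iInter fun α => isClosed_iInter fun β =>
        isClosed_le (((hcont α).sub (hcont β))) continuous_const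
    have hScomp : IsCompact S :=
      (isCompact_Icc (a := (0:ℝ)) (b := t)).of_isClosed_subset hSclosed (fun s hs => hs.1)
    set t₀ := sSup S with ht₀
    have ht₀S : t₀ ∈ S := hScomp.sSup_mem hSne
    have hmem : ∀ α β, θ t₀ α - θ t₀ β ≤ θs := by
      have := ht₀S.2
      simp only [Set.mem_iInter] at this
      exact this
    have ht₀0 : 0 ≤ t₀ := ht₀S.1.1
    have ht₀t : t₀ ≤ t := ht₀S.1.2
    have ht₀lt : t₀ < t := by
      rcases lt_or_eq_of_le ht₀t with h | h
      · exact h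
      · exact absurd (h ▸ hmem α₁ β₁) (not_le.mpr hαβ)
    -- each pair eventually stays below θs
    have hev : ∀ α β, ∀ᶠ s in nhdsWithin t₀ (Set.Ioi t₀), θ s α - θ s β < θs := by
      intro α β
      rcases lt_or_eq_of_le (hmem α β) with hlt | heq
      · have hc : ContinuousAt (fun s => θ s α - θ s β) t₀ :=
          ((hcont α).sub (hcont β)).continuousAt
        have := hc.eventually_lt continuousAt_const hlt
        exact this.filter_mono nhdsWithin_le_nhds
      · -- extremal pair: strict decrease
        have hmax : ∀ γ, θ t₀ γ ≤ θ t₀ α := by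
          intro γ; have := hmem γ β; linarith
        have hmin : ∀ γ, θ t₀ β ≤ θ t₀ γ := by
          intro γ; have := hmem α γ; linarith
        have hd : HasDerivAt (fun s => θ s α - θ s β)
            (G (ν α + κ / N * ∑ γ, φ α γ * Real.sin (θ t₀ γ - θ t₀ α)) -
             G (ν β + κ / N * ∑ γ, φ β γ * Real.sin (θ t₀ γ - θ t₀ β))) t₀ :=
          (hθ t₀ α).sub (hθ t₀ β)
        have hneg := key t₀ α β hmin hmax heq
        have := aux_ev hd (by linarith)
        filter_upwards [this] with s hs
        calc θ s α - θ s β < θ t₀ α - θ t₀ β := hs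
          _ = θs := heq
    have hall : ∀ᶠ s in nhdsWithin t₀ (Set.Ioi t₀), ∀ α β, θ s α - θ s β < θs :=
      eventually_all.2 fun α => eventually_all.2 (hev α)
    have hIoc : Set.Ioc t₀ t ∈ nhdsWithin t₀ (Set.Ioi t₀) :=
      Ioc_mem_nhdsGT_of_mem ⟨le_refl t₀, ht₀lt⟩
    obtain ⟨s, hsall, hsIoc⟩ := (hall.and (eventually_of_mem hIoc (fun x hx => hx))).exists
    have hsS : s ∈ S := ⟨⟨le_trans ht₀0 hsIoc.1.le, hsIoc.2⟩,
      by simp only [Set.mem_iInter]; exact fun α β => (hsall α β).le⟩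
    have hle : s ≤ t₀ := le_csSup hScomp.bddAbove hsS
    linarith [hsIoc.1]
  -- conclude
  intro t ht
  obtain ⟨α₀, hα₀⟩ := Finite.exists_max (θ t)
  obtain ⟨β₀, hβ₀⟩ := Finite.exists_min (θ t)
  have hsup : (⨆ α, θ t α) = θ t α₀ :=
    le_antisymm (ciSup_le hα₀) (le_ciSup (Finite.bddAbove_range _) _)
  have hinf : (⨅ α, θ t α) = θ t β₀ :=
    le_antisymm (ciInf_le (Finite.bddBelow_range _) _) (le_ciInf hβ₀)
  rw [hsup, hinf]
  exact main t ht α₀ β₀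
end
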